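/- The function K(y) = y·(1 + √(2(y−1)/(y−4))) / ((1 + √(2(y−1)/(y−4))) + (y − 2)) is strictly decreasing on [5, ∞); consequently, for every integer d2 ≥ 5, d2 · B(1,d2) > (d2 + 2) · A(1,d2). -/

import Mathlib

/-- Upper endpoint `A(d1,d2)`. -/
noncomputable def Aval (d1 d2 : ℕ) : ℝ :=
  (d1 : ℝ) / (d1 + d2 * (1 + Real.sqrt (2 * ((d1 : ℝ) + d2) / (d1 * ((d2 : ℝ) - 2))))⁻¹)

/-- Upper endpoint `B(d1,d2)`. -/
noncomputable def Bval (d1 d2 : ℕ) : ℝ :=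
  (d1 : ℝ) / (d1 + ((d2 : ℝ) - 2) *
    (1 + Real.sqrt (2 * ((d1 : ℝ) + d2 - 2) / (d1 * ((d2 : ℝ) - 4))))⁻¹)

/-- `K(y) = y(1 + √(2(y−1)/(y−4))) / ((1 + √(2(y−1)/(y−4))) + (y − 2))`. -/
noncomputable def Kfn (y : ℝ) : ℝ :=
  y * (1 + Real.sqrt (2 * (y - 1) / (y - 4))) /
    ((1 + Real.sqrt (2 * (y - 1) / (y - 4))) + (y - 2))


/-!
With `s = √(2(y−1)/(y−4))`, i.e. `y = (4s² − 2)/(s² − 2)`, the function `K` becomes the rational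
function `2(2s² − 1)(s + 1) / (s(s² + 3s − 2))`. As `y` increases on `(4, ∞)`, `s` decreases and
stays `≥ 1`, where this rational function is strictly increasing. The inequality for `d2` is
`K(d2) > K(d2 + 2)`.
-/

open Set

noncomputable def kSqrt (y : ℝ) : ℝ := √(2 * (y - 1) / (y - 4))

noncomputable def kRational (s : ℝ) : ℝ := 2 * (2 * s ^ 2 - 1) * (s + 1) / (s * (s ^ 2 + 3 * s - 2))

lemma kSqrt_sq_mul {y : ℝ} (hy : 4 < y) : kSqrt y ^ 2 * (y - 4) = 2 * (y - 1) := by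
  rw [kSqrt, Real.sq_sqrt (div_nonneg (by linarith) (by linarith))]
  field_simp [(sub_pos.2 hy).ne']

lemma one_le_kSqrt {y : ℝ} (hy : 4 < y) : 1 ≤ kSqrt y :=
  Real.one_le_sqrt.2 <| (one_le_div (by linarith)).2 (by linarith)

lemma kSqrt_strictAntiOn : StrictAntiOn kSqrt (Ioi 4) := by
  intro a ha b hb hab
  simp only [mem_Ioi] at ha hb
  refine Real.sqrt_lt_sqrt (div_nonneg (by linarith) (by linarith)) ?_
  rw [div_lt_div_iff₀ (by linarith) (by linarith)]
  nlinarith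

lemma kRational_denom_pos {s : ℝ} (hs : 1 ≤ s) : 0 < s * (s ^ 2 + 3 * s - 2) := by
  have : 0 < s ^ 2 + 3 * s - 2 := by nlinarith
  positivity

lemma kRational_strictMonoOn : StrictMonoOn kRational (Ici 1) := by
  intro s hs t ht hst
  simp only [mem_Ici] at hs ht
  unfold kRational
  rw [div_lt_div_iff₀ (kRational_denom_pos hs) (kRational_denom_pos ht)]
  obtain ⟨a, ha, rfl⟩ : ∃ a ≥ 0, s = 1 + a := ⟨s - 1, by linarith, by ring⟩
  obtain ⟨b, hb, rfl⟩ : ∃ b ≥ 0, t = 1 + b := ⟨t - 1, by linarith, by ring⟩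
  -- the cross-multiplied difference is `2 (t - s)` times this polynomial in `a = s - 1`, `b = t - 1`
  have hQ : 0 < 4 + 4 * a + 4 * b + 4 * a * b + 2 * a ^ 2 + 2 * b ^ 2 + 5 * a ^ 2 * b
      + 5 * a * b ^ 2 + 4 * a ^ 2 * b ^ 2 := by positivity
  nlinarith [mul_pos (sub_pos.2 hst) hQ]

lemma Kfn_eq_kRational_kSqrt {y : ℝ} (hy : 4 < y) : Kfn y = kRational (kSqrt y) := by
  have hs := one_le_kSqrt hy
  have hrel := kSqrt_sq_mul hy
  unfold Kfn kRational
  rw [← kSqrt, div_eq_div_iff (by linarith) (kRational_denom_pos hs).ne']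
  linear_combination (kSqrt y ^ 2 - 1) * hrel

lemma Kfn_strictAntiOn : StrictAntiOn Kfn (Ioi 4) := by
  intro a ha b hb hab
  rw [Kfn_eq_kRational_kSqrt ha, Kfn_eq_kRational_kSqrt hb]
  exact kRational_strictMonoOn (one_le_kSqrt hb) (one_le_kSqrt ha) (kSqrt_strictAntiOn ha hb hab)

lemma mul_one_div_one_add_mul_inv (x c p : ℝ) (hp : p ≠ 0) :
    x * (1 / (1 + c * p⁻¹)) = x * p / (p + c) := by
  field_simp

lemma natCast_mul_Bval_one (d : ℕ) : (d : ℝ) * Bval 1 d = Kfn d := by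
  rw [Bval, Kfn, Nat.cast_one, one_mul, show (1 : ℝ) + d - 2 = d - 1 by ring,
    mul_one_div_one_add_mul_inv _ _ _ (by positivity)]

lemma add_two_mul_Aval_one (d : ℕ) : ((d : ℝ) + 2) * Aval 1 d = Kfn (d + 2) := by
  rw [Aval, Kfn, Nat.cast_one, one_mul, mul_one_div_one_add_mul_inv _ _ _ (by positivity)]
  ring_nf

theorem K_strictAntiOn_and_consequence :
    StrictAntiOn Kfn (Set.Ici (5 : ℝ)) ∧
      ∀ d2 : ℕ, 5 ≤ d2 → (d2 : ℝ) * Bval 1 d2 > ((d2 : ℝ) + 2) * Aval 1 d2 := by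
  refine ⟨Kfn_strictAntiOn.mono (Ici_subset_Ioi.2 (by norm_num)), fun d hd => ?_⟩
  have hd4 : (4 : ℝ) < d := by exact_mod_cast hd
  rw [natCast_mul_Bval_one, add_two_mul_Aval_one]
  exact Kfn_strictAntiOn hd4 (by simp only [mem_Ioi]; linarith) (by linarith)
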